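/- Let 𝔉 = 𝔉(X) be the free profinite group on a finite set X with |X| > 1. If C ⊆ 𝔉 is an abelian closed normal subgroup, then C = {e}. -/

import Mathlib

set_option linter.unusedVariables false

namespace CSP

/-! ### The profinite completion of a discrete group -/

/-- The index set for the profinite completion: finite-index normal subgroups. -/
abbrev FinQuot (G : Type*) [Group G] : Type _ :=
  {N : Subgroup G // N.Normal ∧ N.FiniteIndex}

variable (G : Type*) [Group G]

instance (N : FinQuot G) : (N.1).Normal := N.2.1

instance (N : FinQuot G) : TopologicalSpace (G ⧸ N.1) := ⊥

instance (N : FinQuot G) : DiscreteTopology (G ⧸ N.1) := ⟨rfl⟩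

instance (N : FinQuot G) : IsTopologicalGroup (G ⧸ N.1) where
  continuous_mul := continuous_of_discreteTopology
  continuous_inv := continuous_of_discreteTopology

/-- The diagonal homomorphism from `G` into the product of all of its finite quotients. -/
def toFinQuots : G →* (∀ N : FinQuot G, G ⧸ N.1) :=
  Pi.monoidHom fun N => QuotientGroup.mk' N.1

/-- The profinite completion of `G` as a subgroup of the product of the finite
quotients of `G`: the closure of the image of the diagonal map. -/
def profSubgroup : Subgroup (∀ N : FinQuot G, G ⧸ N.1) :=
  (toFinQuots G).range.topologicalClosure

/-- The profinite completion of a (discrete) group `G`, as a topological group.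
For `G = F(X)` a free group on a finite set `X`, this is the free profinite group
`𝔉(X)` on `X`. -/
abbrev ProfComp : Type _ := ↥(profSubgroup G)

/-- The canonical homomorphism from `G` to its profinite completion.  For a free
group this is the embedding of `F(X)` into the free profinite group `𝔉(X)`. -/
def unit : G →* ProfComp G :=
  (toFinQuots G).codRestrict _ fun g =>
    Subgroup.le_topologicalClosure _ (MonoidHom.mem_range.2 ⟨g, rfl⟩)

/-!
Suppose `c ∈ C` has nontrivial image in a finite quotient `Q = F(X) ⧸ N`, and let `x ≠ y` in `X`.
Map `F(X)`, and hence `𝔉(X)`, to the regular wreath product `S₃ ≀ P`, `P = Q × C_{2m} × C_{2m}`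
with `m = |Q|`, by `x ↦ (δ (0 1), q)`, `y ↦ (δ (1 2), r)` and `z ↦ (1, (z̄, 0, 0))` otherwise,
where `q = (x̄, 1, 0)`, `r = (ȳ, 0, 1)` and `δ σ` is `σ` at `1` and trivial elsewhere.
The image `A` of `C` is abelian and normalised by the image of `𝔉(X)`, which contains the
`|q|`-th power of the image of `x`: the base element equal to `(0 1)` on `⟨q⟩` and trivial
elsewhere; likewise for `y`. For such a base element `b` and `(f, γ)` the image of `c`, the
commutator `⁅b, (f, γ)⁆ ∈ A` is a base element. Evaluating at `1` that it commutes with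
`(f, γ)` shows `(0 1) = 1` if `γ, γ² ∉ ⟨q⟩`; that it commutes with the commutator for `y` shows
that `(0 1)` and `(1 2)` commute if `γ ∉ ⟨q⟩ ∪ ⟨r⟩`. Since `γ` has nontrivial `Q`-component, the
cyclic factors force one of these cases (up to swapping `x` and `y`).
-/

end CSP

namespace RegularWreathProduct

open Finset Subgroup
open scoped commutatorElement

variable {K P : Type*} [Group K] [Group P]

lemma pow_right (w : K ≀ᵣ P) (n : ℕ) : (w ^ n).right = w.right ^ n :=
  map_pow rightHom w n

lemma commutatorElement_mk_one_left (S : P → K) (w : K ≀ᵣ P) :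
    ⁅(⟨S, 1⟩ : K ≀ᵣ P), w⁆
      = ⟨fun z => S z * w.left z * (S (w.right⁻¹ * z))⁻¹ * (w.left z)⁻¹, 1⟩ := by
  refine RegularWreathProduct.ext (funext fun z => ?_) ?_ <;>
    simp [commutatorElement_def, mul_assoc]

section MulSingle

variable [DecidableEq P]

lemma mulSingle_pow_left_apply (k : K) (p z : P) (n : ℕ) :
    ((⟨Pi.mulSingle 1 k, p⟩ : K ≀ᵣ P) ^ n).left z = k ^ #{j ∈ range n | p ^ j = z} := by
  induction n with
  | zero => simp
  | succ n ih =>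
    rw [pow_succ, RegularWreathProduct.mul_left, Pi.mul_apply, ih, pow_right]
    simp only [card_filter, sum_range_succ, pow_add, Pi.mulSingle_apply, inv_mul_eq_one]
    split_ifs <;> simp

lemma mulSingle_pow_orderOf (k : K) {p : P} (hp : IsOfFinOrder p) :
    (⟨Pi.mulSingle 1 k, p⟩ : K ≀ᵣ P) ^ orderOf p
      = ⟨(zpowers p : Set P).mulIndicator fun _ => k, 1⟩ := by
  refine RegularWreathProduct.ext (funext fun z => ?_) (by rw [pow_right, pow_orderOf_eq_one])
  dsimp only
  rw [mulSingle_pow_left_apply]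
  by_cases hz : z ∈ zpowers p
  · obtain ⟨i, hi, rfl⟩ := mem_image.1 (hp.mem_zpowers_iff_mem_range_orderOf.1 hz)
    have hfilter : {j ∈ range (orderOf p) | p ^ j = p ^ i} = {i} := by
      ext j
      simp only [mem_filter, mem_range, mem_singleton]
      refine ⟨fun ⟨hj, h⟩ => pow_injOn_Iio_orderOf hj (mem_range.1 hi) h, ?_⟩
      rintro rfl
      exact ⟨mem_range.1 hi, rfl⟩
    rw [hfilter, Set.mulIndicator_of_mem hz, card_singleton, pow_one]
  · rw [Set.mulIndicator_of_notMem hz, card_eq_zero.2, pow_zero]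
    exact filter_eq_empty_iff.2 fun j _ h => hz ⟨j, by simp [← h]⟩

end MulSingle

section AbelianSubgroup

variable {A H : Subgroup (K ≀ᵣ P)} (hA : ∀ a ∈ A, ∀ b ∈ A, a * b = b * a)
  (hAH : ∀ h ∈ H, ∀ a ∈ A, h * a * h⁻¹ ∈ A) {w : K ≀ᵣ P} (hw : w ∈ A)
include hA hAH hw

lemma apply_one_eq_one_of_mk_one_mem {S : P → K} (hS : ⟨S, 1⟩ ∈ H)
    (h₁ : S w.right⁻¹ = 1) (h₂ : S (w.right⁻¹ * w.right⁻¹) = 1) : S 1 = 1 := by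
  have hT : ⁅(⟨S, 1⟩ : K ≀ᵣ P), w⁆ ∈ A := A.mul_mem (hAH _ hS w hw) (A.inv_mem hw)
  have h := congrFun (congrArg RegularWreathProduct.left (hA _ hT w hw)) 1
  simpa [commutatorElement_mk_one_left, h₁, h₂] using h

lemma commute_apply_one_of_mk_one_mem {S S' : P → K} (hS : ⟨S, 1⟩ ∈ H) (hS' : ⟨S', 1⟩ ∈ H)
    (h₁ : S w.right⁻¹ = 1) (h₁' : S' w.right⁻¹ = 1) : Commute (S 1) (S' 1) := by
  have hT : ⁅(⟨S, 1⟩ : K ≀ᵣ P), w⁆ ∈ A := A.mul_mem (hAH _ hS w hw) (A.inv_mem hw)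
  have hT' : ⁅(⟨S', 1⟩ : K ≀ᵣ P), w⁆ ∈ A := A.mul_mem (hAH _ hS' w hw) (A.inv_mem hw)
  have h := congrFun (congrArg RegularWreathProduct.left (hA _ hT _ hT')) 1
  simp only [commutatorElement_mk_one_left, RegularWreathProduct.mul_left,
    Pi.mul_apply, inv_one, one_mul, h₁, h₁', mul_one, mul_inv_cancel_right] at h
  exact h

variable [DecidableEq P] {p p' : P} {k k' : K}

lemma eq_one_of_mulSingle_mem (hp : IsOfFinOrder p) (hk : ⟨Pi.mulSingle 1 k, p⟩ ∈ H)
    (h₁ : w.right ∉ zpowers p) (h₂ : w.right ^ 2 ∉ zpowers p) : k = 1 := by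
  have hS := H.pow_mem hk (orderOf p)
  rw [mulSingle_pow_orderOf k hp] at hS
  simpa [Set.mulIndicator, h₁, ← mul_inv_rev, ← sq, h₂] using
    apply_one_eq_one_of_mk_one_mem hA hAH hw hS

lemma commute_of_mulSingle_mem (hp : IsOfFinOrder p) (hp' : IsOfFinOrder p')
    (hk : ⟨Pi.mulSingle 1 k, p⟩ ∈ H) (hk' : ⟨Pi.mulSingle 1 k', p'⟩ ∈ H)
    (h : w.right ∉ zpowers p) (h' : w.right ∉ zpowers p') : Commute k k' := by
  have hS := H.pow_mem hk (orderOf p)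
  have hS' := H.pow_mem hk' (orderOf p')
  rw [mulSingle_pow_orderOf k hp] at hS
  rw [mulSingle_pow_orderOf k' hp'] at hS'
  simpa [Set.mulIndicator, h, h'] using commute_apply_one_of_mk_one_mem hA hAH hw hS hS'

end AbelianSubgroup

end RegularWreathProduct

section CyclicFactors

open Multiplicative Subgroup

variable {Q : Type*} [Group Q] {e : ℕ}

lemma zpow_eq_one_of_sq_ofAdd_zpow_eq_one {q₀ : Q} (hq : q₀ ^ e = 1) {j : ℤ}
    (hj : ((ofAdd (1 : ZMod (2 * e))) ^ j) ^ 2 = 1) : q₀ ^ j = 1 := by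
  rw [← zpow_natCast, ← zpow_mul, ← orderOf_dvd_iff_zpow_eq_one, orderOf_ofAdd_eq_addOrderOf,
    ZMod.addOrderOf_one, Nat.cast_mul, Nat.cast_ofNat, mul_comm j] at hj
  rw [← orderOf_dvd_iff_zpow_eq_one]
  exact (Int.natCast_dvd_natCast.2 (orderOf_dvd_of_pow_eq_one hq)).trans
    (Int.dvd_of_mul_dvd_mul_left two_ne_zero hj)

variable {q₀ r₀ : Q} {c : Q × Multiplicative (ZMod (2 * e)) × Multiplicative (ZMod (2 * e))}

lemma fst_eq_one_of_mem_zpowers_of_sq_mem_zpowers (hq : q₀ ^ e = 1)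
    (hcq : c ∈ zpowers (q₀, ofAdd 1, 1)) (hcr : c ^ 2 ∈ zpowers (r₀, 1, ofAdd 1)) : c.1 = 1 := by
  obtain ⟨j, rfl⟩ := hcq
  obtain ⟨k, hk⟩ := hcr
  have hsnd := congrArg (fun a => a.2.1) hk
  simp only [Prod.pow_mk, one_zpow, one_pow] at hsnd
  simpa using zpow_eq_one_of_sq_ofAdd_zpow_eq_one hq hsnd.symm

lemma fst_eq_one_of_mem_zpowers_of_sq_mem_zpowers' (hr : r₀ ^ e = 1)
    (hcr : c ∈ zpowers (r₀, 1, ofAdd 1)) (hcq : c ^ 2 ∈ zpowers (q₀, ofAdd 1, 1)) : c.1 = 1 := by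
  obtain ⟨j, rfl⟩ := hcr
  obtain ⟨k, hk⟩ := hcq
  have hsnd := congrArg (fun a => a.2.2) hk
  simp only [Prod.pow_mk, one_zpow, one_pow] at hsnd
  simpa using zpow_eq_one_of_sq_ofAdd_zpow_eq_one hr hsnd.symm

lemma notMem_zpowers_cases (hq : q₀ ^ e = 1) (hr : r₀ ^ e = 1) (hc : c.1 ≠ 1) :
    (c ∉ zpowers (q₀, ofAdd 1, 1) ∧ c ∉ zpowers (r₀, 1, ofAdd 1)) ∨
      (c ∉ zpowers (r₀, 1, ofAdd 1) ∧ c ^ 2 ∉ zpowers (r₀, 1, ofAdd 1)) ∨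
      (c ∉ zpowers (q₀, ofAdd 1, 1) ∧ c ^ 2 ∉ zpowers (q₀, ofAdd 1, 1)) := by
  by_cases hcq : c ∈ zpowers (q₀, ofAdd 1, 1)
  · refine Or.inr (Or.inl ⟨fun hcr => hc ?_, fun hcr => hc ?_⟩)
    exacts [fst_eq_one_of_mem_zpowers_of_sq_mem_zpowers hq hcq (pow_mem hcr 2),
      fst_eq_one_of_mem_zpowers_of_sq_mem_zpowers hq hcq hcr]
  by_cases hcr : c ∈ zpowers (r₀, 1, ofAdd 1)
  · exact Or.inr (Or.inr ⟨hcq, fun hcq' =>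
      hc (fst_eq_one_of_mem_zpowers_of_sq_mem_zpowers' hr hcr hcq')⟩)
  exact Or.inl ⟨hcq, hcr⟩

end CyclicFactors

namespace CSP

section ProfiniteLift

variable {G : Type*} [Group G] {W : Type*} [Group W] [Finite W]

instance (N : FinQuot G) : N.1.FiniteIndex := N.2.2

def FinQuot.ker (ψ : G →* W) : FinQuot G := ⟨ψ.ker, ψ.normal_ker, inferInstance⟩

def ProfComp.lift (ψ : G →* W) : ProfComp G →* W :=
  (QuotientGroup.lift (FinQuot.ker ψ).1 ψ le_rfl).comp
    ((Pi.evalMonoidHom (fun N : FinQuot G => G ⧸ N.1) (FinQuot.ker ψ)).comp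
      (profSubgroup G).subtype)

lemma ProfComp.lift_unit (ψ : G →* W) (g : G) : ProfComp.lift ψ (unit G g) = ψ g := rfl

lemma ProfComp.map_lift_apply (ψ : G →* W) {N : FinQuot G} (χ : W →* G ⧸ N.1)
    (hχ : χ.comp ψ = QuotientGroup.mk' N.1) (x : ProfComp G) :
    χ (ProfComp.lift ψ x) = x.1 N := by
  let χ' : G ⧸ (FinQuot.ker ψ).1 → G ⧸ N.1 := fun a => χ (QuotientGroup.lift _ ψ le_rfl a)
  have hrange : Set.EqOn (fun v : ∀ M : FinQuot G, G ⧸ M.1 => χ' (v (FinQuot.ker ψ)))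
      (fun v => v N) (toFinQuots G).range := by
    rintro _ ⟨g, rfl⟩
    exact DFunLike.congr_fun hχ g
  exact hrange.closure ((continuous_of_discreteTopology (f := χ')).comp (continuous_apply _))
    (continuous_apply N) x.2

end ProfiniteLift

section FreeGroup

open Multiplicative Subgroup RegularWreathProduct
open scoped Classical

abbrev AugQuot (G : Type*) [Group G] (N : FinQuot G) : Type _ :=
  (G ⧸ N.1) × Multiplicative (ZMod (2 * Nat.card (G ⧸ N.1)))
    × Multiplicative (ZMod (2 * Nat.card (G ⧸ N.1)))

variable {X : Type}

noncomputable def wreathRep (x y : X) (N : FinQuot (FreeGroup X)) :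
    FreeGroup X →* Equiv.Perm (Fin 3) ≀ᵣ AugQuot (FreeGroup X) N :=
  FreeGroup.lift fun z =>
    ⟨if z = x then Pi.mulSingle 1 (Equiv.swap 0 1)
      else if z = y then Pi.mulSingle 1 (Equiv.swap 1 2) else 1,
    (QuotientGroup.mk (FreeGroup.of z), if z = x then ofAdd 1 else 1, if z = y then ofAdd 1 else 1)⟩

variable {x y : X} (hxy : x ≠ y) (N : FinQuot (FreeGroup X))
include hxy

lemma wreathRep_of_left : wreathRep x y N (FreeGroup.of x) =
    ⟨Pi.mulSingle 1 (Equiv.swap 0 1), (QuotientGroup.mk (FreeGroup.of x), ofAdd 1, 1)⟩ := by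
  simp [wreathRep, hxy]

lemma wreathRep_of_right : wreathRep x y N (FreeGroup.of y) =
    ⟨Pi.mulSingle 1 (Equiv.swap 1 2), (QuotientGroup.mk (FreeGroup.of y), 1, ofAdd 1)⟩ := by
  simp [wreathRep, hxy.symm]

omit hxy in
lemma fst_comp_rightHom_comp_wreathRep :
    ((MonoidHom.fst _ _).comp rightHom).comp (wreathRep x y N)
      = QuotientGroup.mk' N.1 :=
  FreeGroup.ext_hom _ _ fun z => by simp [wreathRep]

lemma apply_eq_one_of_mem_of_abelian_normal {C : Subgroup (ProfComp (FreeGroup X))}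
    (hCn : C.Normal) (hCab : ∀ a ∈ C, ∀ b ∈ C, a * b = b * a) {c : ProfComp (FreeGroup X)}
    (hc : c ∈ C) : c.1 N = 1 := by
  by_contra hcN
  set Φ := ProfComp.lift (wreathRep x y N)
  have hA : ∀ a ∈ C.map Φ, ∀ b ∈ C.map Φ, a * b = b * a := by
    rintro _ ⟨a, ha, rfl⟩ _ ⟨b, hb, rfl⟩
    rw [← map_mul, hCab a ha b hb, map_mul]
  have hAH : ∀ h ∈ Φ.range, ∀ a ∈ C.map Φ, h * a * h⁻¹ ∈ C.map Φ := by
    rintro _ ⟨g, rfl⟩ _ ⟨a, ha, rfl⟩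
    exact ⟨g * a * g⁻¹, hCn.conj_mem a ha g, by simp⟩
  have hw : Φ c ∈ C.map Φ := ⟨c, hc, rfl⟩
  have hx : _ ∈ Φ.range := ⟨unit _ (FreeGroup.of x), wreathRep_of_left hxy N⟩
  have hy : _ ∈ Φ.range := ⟨unit _ (FreeGroup.of y), wreathRep_of_right hxy N⟩
  have hright : (Φ c).right.1 = c.1 N :=
    ProfComp.map_lift_apply _ _ (fst_comp_rightHom_comp_wreathRep N) c
  have hfin (p : AugQuot (FreeGroup X) N) : IsOfFinOrder p := isOfFinOrder_of_finite p
  have hexp (a : FreeGroup X ⧸ N.1) : a ^ Nat.card (FreeGroup X ⧸ N.1) = 1 := pow_card_eq_one'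
  rcases notMem_zpowers_cases (hexp _) (hexp _) (hright ▸ hcN) with
    ⟨hq, hr⟩ | ⟨hr, hr₂⟩ | ⟨hq, hq₂⟩
  · exact absurd (commute_of_mulSingle_mem hA hAH hw (hfin _) (hfin _) hx hy hq hr)
      (by unfold Commute SemiconjBy; decide)
  · exact absurd (eq_one_of_mulSingle_mem hA hAH hw (hfin _) hy hr hr₂) (by decide)
  · exact absurd (eq_one_of_mulSingle_mem hA hAH hw (hfin _) hx hq hq₂) (by decide)

end FreeGroup

theorem abelian_closed_normal_trivial (X : Type) (hX : 1 < Nat.card X)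
    (C : Subgroup (ProfComp (FreeGroup X)))
    (hCn : C.Normal) (hCab : ∀ a ∈ C, ∀ b ∈ C, a * b = b * a) :
    C = ⊥ := by
  have : Finite X := Nat.finite_of_card_ne_zero (by omega)
  obtain ⟨x, y, hxy⟩ := (Finite.one_lt_card_iff_nontrivial.mp hX).exists_pair_ne
  refine (Subgroup.eq_bot_iff_forall C).2 fun c hc => Subtype.ext (funext fun N => ?_)
  exact apply_eq_one_of_mem_of_abelian_normal hxy N hCn hCab hc

end CSP
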